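/- arXiv:2307.00442 — 5 statements merged into one kernel-verified Lean document; each statement's English description precedes it below -/
import Mathlib

section
/- Let C be a category with an initial object ⊥ and let F : C ⥤ C be an endofunctor. Define X : ℕ → C by X 0 = ⊥ and X (n+1) = F.obj (X n), and morphisms f n : X n ⟶ X (n+1) by taking f 0 to be the unique morphism out of ⊥ and f (n+1) = F.map (f n); let D : ℕ ⥤ C be the chain determined by this data (e.g. via Functor.ofSequence). Suppose D admits a colimit cocone with point I and coprojections ι n : X n ⟶ I, and let k : I ⟶ F.obj I be the unique morphism satisfying ι n ≫ k = f n ≫ F.map (ι n) for all n (induced by the universal property of the colimit). If k is an isomorphism, then the F-algebra (I, inv k) is an initial object of the category of F-algebras. -/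
open CategoryTheory CategoryTheory.Limits

universe v u

namespace Adamek0

variable {C : Type u} [Category.{v} C] [HasInitial C] (F : C ⥤ C)

/-- The objects of the initial chain: `X 0 = ⊥`, `X (n+1) = F (X n)`. -/
noncomputable def X : ℕ → C
  | 0 => ⊥_ C
  | n + 1 => F.obj (X n)

/-- The connecting morphisms of the initial chain. -/
noncomputable def f : ∀ n : ℕ, X F n ⟶ X F (n + 1)
  | 0 => initial.to _
  | n + 1 => F.map (f n)

/-- The initial chain `⊥ ⟶ F ⊥ ⟶ F² ⊥ ⟶ ⋯` as a functor `ℕ ⥤ C`. -/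
noncomputable def D : ℕ ⥤ C := Functor.ofSequence (f F)

end Adamek0

/-
Every `F`-algebra `(A, a)` receives a cocone from the initial chain, `g 0 = ¡` and
`g (n+1) = F (g n) ≫ a`; let `u : I ⟶ A` be the induced map. Since `ι (n+1) ≫ k = F (ι n)`,
an induction on `n` shows that any `u'` with `k ≫ F u' ≫ a = u'` satisfies `ι n ≫ u' = g n`
for all `n`, and that `k ≫ F u ≫ a` agrees with `g n` on every coprojection. So `u` is the
unique morphism of algebras `(I, k⁻¹) ⟶ (A, a)`.
-/

namespace Adamek0

variable {C : Type u} [Category.{v} C] [HasInitial C] (F : C ⥤ C)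

noncomputable def toAlgebra (A : Endofunctor.Algebra F) : ∀ n : ℕ, X F n ⟶ A.a
  | 0 => initial.to _
  | n + 1 => F.map (toAlgebra A n) ≫ A.str

lemma f_comp_toAlgebra_succ (A : Endofunctor.Algebra F) (n : ℕ) :
    f F n ≫ toAlgebra F A (n + 1) = toAlgebra F A n := by
  induction n with
  | zero => exact initial.hom_ext _ _
  | succ n ih =>
    change F.map (f F n) ≫ F.map (toAlgebra F A (n + 1)) ≫ A.str = F.map (toAlgebra F A n) ≫ A.str
    rw [← F.map_comp_assoc, ih]

lemma D_map_homOfLE_succ (n : ℕ) : (D F).map (homOfLE (Nat.le_add_right n 1)) = f F n :=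
  Functor.ofSequence_map_homOfLE_succ _ n

noncomputable def algebraCocone (A : Endofunctor.Algebra F) : Cocone (D F) where
  pt := A.a
  ι := NatTrans.ofSequence (toAlgebra F A) fun n => by
    rw [D_map_homOfLE_succ]
    exact (f_comp_toAlgebra_succ F A n).trans (Category.comp_id _).symm

lemma f_comp_ι_app_succ (c : Cocone (D F)) (n : ℕ) : f F n ≫ c.ι.app (n + 1) = c.ι.app n := by
  have h := c.w (homOfLE (Nat.le_add_right n 1))
  rwa [D_map_homOfLE_succ] at h

section

variable {F} {P : C} (ι : ∀ n, X F n ⟶ P) {k : P ⟶ F.obj P}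
  (hk : ∀ n, ι n ≫ k = f F n ≫ F.map (ι n)) (hι : ∀ n, f F n ≫ ι (n + 1) = ι n)
  (A : Endofunctor.Algebra F)
include hk hι

-- The ascription reads `X F (n + 1)` as `F.obj (X F n)`, which `rw` cannot see through.
lemma ι_succ_comp (n : ℕ) : (ι (n + 1) ≫ k : F.obj (X F n) ⟶ F.obj P) = F.map (ι n) :=
  calc (ι (n + 1) ≫ k : F.obj (X F n) ⟶ F.obj P) = F.map (f F n) ≫ F.map (ι (n + 1)) := hk (n + 1)
    _ = F.map (ι n) := by rw [← F.map_comp, hι]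

lemma ι_succ_comp_map_comp_str {n : ℕ} {u : P ⟶ A.a} (h : ι n ≫ u = toAlgebra F A n) :
    ι (n + 1) ≫ k ≫ F.map u ≫ A.str = toAlgebra F A (n + 1) :=
  calc (ι (n + 1) ≫ k ≫ F.map u ≫ A.str : F.obj (X F n) ⟶ A.a)
      = (ι (n + 1) ≫ k : F.obj (X F n) ⟶ F.obj P) ≫ F.map u ≫ A.str := (Category.assoc _ _ _).symm
    _ = F.map (ι n ≫ u) ≫ A.str := by rw [ι_succ_comp ι hk hι, F.map_comp_assoc]
    _ = F.map (toAlgebra F A n) ≫ A.str := by rw [h]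

lemma ι_comp_map_comp_str {u : P ⟶ A.a} (hu : ∀ n, ι n ≫ u = toAlgebra F A n) (n : ℕ) :
    ι n ≫ k ≫ F.map u ≫ A.str = toAlgebra F A n := by
  rw [← hι n, Category.assoc, ι_succ_comp_map_comp_str ι hk hι A (hu n), f_comp_toAlgebra_succ]

lemma ι_comp_eq_toAlgebra {u : P ⟶ A.a} (hu : k ≫ F.map u ≫ A.str = u) (n : ℕ) :
    ι n ≫ u = toAlgebra F A n := by
  induction n with
  | zero => exact initial.hom_ext _ _
  | succ n ih => rw [← hu]; exact ι_succ_comp_map_comp_str ι hk hι A ih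

end

end Adamek0

/-- Ad\'amek's initial algebra construction: if the initial chain
`⊥ ⟶ F ⊥ ⟶ F² ⊥ ⟶ ⋯` has a colimit `I` and the canonically induced map
`k : I ⟶ F I` is an isomorphism, then `(I, inv k)` is an initial `F`-algebra. -/
theorem adamek_initial_algebra {C : Type u} [Category.{v} C] [HasInitial C] (F : C ⥤ C)
    (c : Cocone (Adamek0.D F)) (hc : IsColimit c)
    (k : c.pt ⟶ F.obj c.pt)
    (hk : ∀ n : ℕ, c.ι.app n ≫ k = Adamek0.f F n ≫ F.map (c.ι.app n))
    (hiso : IsIso k) :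
    Nonempty (IsInitial (⟨c.pt, inv k⟩ : Endofunctor.Algebra F)) := by
  have hι : ∀ n, Adamek0.f F n ≫ c.ι.app (n + 1) = c.ι.app n := Adamek0.f_comp_ι_app_succ F c
  have desc_fixed (A : Endofunctor.Algebra F) :
      k ≫ F.map (hc.desc (Adamek0.algebraCocone F A)) ≫ A.str =
        hc.desc (Adamek0.algebraCocone F A) :=
    hc.hom_ext fun n => (Adamek0.ι_comp_map_comp_str c.ι.app hk hι A (hc.fac _) n).trans
      (hc.fac (Adamek0.algebraCocone F A) n).symm
  have eq_desc (A : Endofunctor.Algebra F) (u : c.pt ⟶ A.a) (hu : k ≫ F.map u ≫ A.str = u) :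
      u = hc.desc (Adamek0.algebraCocone F A) :=
    hc.hom_ext fun n => (Adamek0.ι_comp_eq_toAlgebra c.ι.app hk hι A hu n).trans
      (hc.fac (Adamek0.algebraCocone F A) n).symm
  exact ⟨IsInitial.ofUniqueHom (fun A => ⟨_, (IsIso.eq_inv_comp k).2 (desc_fixed A)⟩)
    fun A m => Endofunctor.Algebra.Hom.ext (eq_desc A m.f ((IsIso.eq_inv_comp k).1 m.h))⟩
end

section
/- Let C be a category that has an initial object and colimits of shape ℕ (colimits of ω-chains), and let F : C ⥤ C be an endofunctor that preserves colimits of shape ℕ. Then the category of F-algebras, Endofunctor.Algebra F, has an initial object, and the structure map of this initial algebra is an isomorphism. -/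
/-!
Adámek's construction. The colimit `A` of the initial chain `⊥ → F ⊥ → F² ⊥ → ⋯` carries the
algebra structure `F A ≅ colim Fⁿ⁺¹ ⊥ ⟶ A`, since `F` preserves the colimit. Every algebra
`(B, β)` receives a cocone from the chain, defined recursively by `⊥ ⟶ B` and
`Fⁿ⁺¹ ⊥ ⟶ F B ⟶ B`; by induction on `n`, every algebra morphism out of `A` agrees with it on the
`n`-th leg, which gives existence and uniqueness of morphisms out of `A`. The structure map of the
initial algebra is then invertible by Lambek's lemma.
-/

open CategoryTheory CategoryTheory.Limits

universe v u

namespace CategoryTheory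

variable {C : Type u} [Category.{v} C]

def Limits.Cocone.ofSequence {G : ℕ ⥤ C} {X : C} (ι : ∀ n, G.obj n ⟶ X)
    (w : ∀ n, G.map (homOfLE (n.le_add_right 1)) ≫ ι (n + 1) = ι n) : Cocone G where
  pt := X
  ι := NatTrans.ofSequence ι (fun n => by simp [w])

namespace Endofunctor

variable [HasInitial C] (F : C ⥤ C)

noncomputable def initialChainObj : ℕ → C
  | 0 => ⊥_ C
  | n + 1 => F.obj (initialChainObj n)

noncomputable def initialChainMap : ∀ n, initialChainObj F n ⟶ initialChainObj F (n + 1)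
  | 0 => initial.to _
  | n + 1 => F.map (initialChainMap n)

noncomputable def initialChain : ℕ ⥤ C := Functor.ofSequence (initialChainMap F)

@[simp]
lemma initialChain_map_succ (n : ℕ) :
    (initialChain F).map (homOfLE (n.le_add_right 1)) = initialChainMap F n :=
  Functor.ofSequence_map_homOfLE_succ _ n

variable {F} (B : Algebra F)

noncomputable def initialChainToAlgebra : ∀ n, initialChainObj F n ⟶ B.a
  | 0 => initial.to _
  | n + 1 => F.map (initialChainToAlgebra n) ≫ B.str

lemma initialChainMap_toAlgebra :
    ∀ n, initialChainMap F n ≫ initialChainToAlgebra B (n + 1) = initialChainToAlgebra B n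
  | 0 => initial.hom_ext _ _
  | n + 1 => by
      change F.map _ ≫ F.map _ ≫ B.str = F.map _ ≫ B.str
      rw [← F.map_comp_assoc, initialChainMap_toAlgebra n]

variable [HasColimitsOfShape ℕ C]

@[simp]
lemma initialChainMap_ι (n : ℕ) :
    initialChainMap F n ≫ colimit.ι (initialChain F) (n + 1) = colimit.ι (initialChain F) n := by
  rw [← initialChain_map_succ]
  exact colimit.w (initialChain F) _

noncomputable def initialChainDesc : colimit (initialChain F) ⟶ B.a :=
  colimit.desc (initialChain F) <| Cocone.ofSequence (initialChainToAlgebra B) fun n =>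
    (congrArg (· ≫ _) (initialChain_map_succ F n)).trans (initialChainMap_toAlgebra B n)

@[simp]
lemma ι_initialChainDesc (n : ℕ) :
    colimit.ι (initialChain F) n ≫ initialChainDesc B = initialChainToAlgebra B n :=
  colimit.ι_desc _ n

variable (F) [PreservesColimitsOfShape ℕ F]

noncomputable def isColimitMapCoconeInitialChain :
    IsColimit (F.mapCocone (colimit.cocone (initialChain F))) :=
  isColimitOfPreserves F (colimit.isColimit _)

noncomputable def initialChainColimitStr :
    F.obj (colimit (initialChain F)) ⟶ colimit (initialChain F) :=
  (isColimitMapCoconeInitialChain F).desc <|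
    Cocone.ofSequence (fun n => colimit.ι (initialChain F) (n + 1)) fun n =>
      (congrArg (· ≫ _) (congrArg F.map (initialChain_map_succ F n))).trans
        (initialChainMap_ι (n + 1))

lemma map_ι_initialChainColimitStr_assoc (n : ℕ) {Z : C} (h : colimit (initialChain F) ⟶ Z) :
    F.map (colimit.ι (initialChain F) n) ≫ initialChainColimitStr F ≫ h =
      colimit.ι (initialChain F) (n + 1) ≫ h :=
  (Category.assoc _ _ _).symm.trans
    (congrArg (· ≫ h) ((isColimitMapCoconeInitialChain F).fac _ n))

/-- An `abbrev`, so that the rewrites below see the carrier as `colimit (initialChain F)`. -/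
noncomputable abbrev Algebra.ofInitialChain : Algebra F :=
  ⟨colimit (initialChain F), initialChainColimitStr F⟩

variable {F}

lemma Algebra.ι_ofInitialChain_hom (g : Algebra.ofInitialChain F ⟶ B) (n : ℕ) :
    colimit.ι (initialChain F) n ≫ g.f = initialChainToAlgebra B n := by
  induction n with
  | zero => exact initial.hom_ext _ _
  | succ n ih =>
    have h := map_ι_initialChainColimitStr_assoc F n g.f
    rw [← g.h, ← F.map_comp_assoc, ih] at h
    exact h.symm

noncomputable def Algebra.ofInitialChainLift : Algebra.ofInitialChain F ⟶ B where
  f := initialChainDesc B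
  h := (isColimitMapCoconeInitialChain F).hom_ext fun n => by
    have h : F.map (colimit.ι (initialChain F) n) ≫ initialChainColimitStr F ≫
        initialChainDesc B = initialChainToAlgebra B (n + 1) :=
      (map_ι_initialChainColimitStr_assoc F n _).trans (ι_initialChainDesc B (n + 1))
    change F.map (colimit.ι (initialChain F) n) ≫ F.map (initialChainDesc B) ≫ B.str =
      F.map (colimit.ι (initialChain F) n) ≫ initialChainColimitStr F ≫ initialChainDesc B
    rw [h, ← F.map_comp_assoc, ι_initialChainDesc]
    rfl

variable (F)

noncomputable def Algebra.ofInitialChainIsInitial : IsInitial (Algebra.ofInitialChain F) :=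
  IsInitial.ofUniqueHom (fun B => Algebra.ofInitialChainLift B) fun B g =>
    Algebra.Hom.ext <| colimit.hom_ext fun n => by
      rw [Algebra.ι_ofInitialChain_hom, Algebra.ι_ofInitialChain_hom]

end Endofunctor

end CategoryTheory

/-- If `C` has an initial object and colimits of ω-chains, and `F : C ⥤ C` preserves
colimits of ω-chains, then the category of `F`-algebras has an initial object, whose
structure map is an isomorphism. -/
theorem adamek_hasInitial_algebra {C : Type u} [Category.{v} C] [HasInitial C]
    [HasColimitsOfShape ℕ C] (F : C ⥤ C) [PreservesColimitsOfShape ℕ F] :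
    ∃ A : Endofunctor.Algebra F, Nonempty (IsInitial A) ∧ IsIso A.str :=
  let hA := Endofunctor.Algebra.ofInitialChainIsInitial F
  ⟨_, ⟨hA⟩, Endofunctor.Algebra.Initial.str_isIso hA⟩
end

section
/- Let C be a category, F : C ⥤ C an endofunctor, and suppose there exists a limit ordinal λ such that (C, F) is compatible with λ-sequences. Let ι : Fix(F) ⥤ Endofunctor.Coalgebra F be the inclusion and let I be a left adjoint to ι (with a chosen adjunction). For any F-coalgebra (V, ν), the coaction ν defines an F-coalgebra homomorphism (V, ν) ⟶ (F.obj V, F.map ν), and this homomorphism is F-local: its image under I is an isomorphism. -/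
/-!
A coalgebra map `g : (F V, F ν) ⟶ W` satisfies `F.map (ν ≫ g) = g ≫ W.str`, so when `W.str` is
invertible `g` is recovered from `ν ≫ g` as `F.map (ν ≫ g) ≫ W.str⁻¹`. Hence precomposition
with `ν` is bijective on maps into every fixed point of `F`, i.e. `ν` is local with respect to
`Fix(F)`, and a left adjoint to the inclusion of a full subcategory inverts exactly the
morphisms that are local with respect to it.
-/

open CategoryTheory CategoryTheory.Limits

universe w v u

/-- The pair `(C, F)` is compatible with `λ`-sequences: `λ` is a limit ordinal, `C` has
colimits of shape `Set.Iio θ` for every limit ordinal `0 < θ ≤ λ`, and `F` preserves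
colimits of shape `Set.Iio λ`. -/
def CompatibleWithSequences {C : Type u} [Category.{v} C] (F : C ⥤ C)
    (lam : Ordinal.{w}) : Prop :=
  Order.IsSuccLimit lam ∧
    (∀ θ : Ordinal.{w}, Order.IsSuccLimit θ → 0 < θ → θ ≤ lam → HasColimitsOfShape (Set.Iio θ) C) ∧
    PreservesColimitsOfShape (Set.Iio lam) F

namespace CategoryTheory.Endofunctor.Coalgebra

variable {C : Type u} [Category.{v} C] {F : C ⥤ C}

def strHom (V : Coalgebra F) : V ⟶ ⟨F.obj V.V, F.map V.str⟩ where
  f := V.str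
  h := rfl

noncomputable def strDesc (V : Coalgebra F) {W : Coalgebra F} [IsIso W.str] (g : V ⟶ W) :
    (⟨F.obj V.V, F.map V.str⟩ : Coalgebra F) ⟶ W where
  f := F.map g.f ≫ inv W.str
  h := by
    change F.map V.str ≫ F.map (F.map g.f ≫ inv W.str) = (F.map g.f ≫ inv W.str) ≫ W.str
    rw [← F.map_comp, ← Category.assoc, g.h, Category.assoc, IsIso.hom_inv_id,
      Category.comp_id, Category.assoc, IsIso.inv_hom_id, Category.comp_id]

theorem strHom_comp_strDesc (V : Coalgebra F) {W : Coalgebra F} [IsIso W.str] (g : V ⟶ W) :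
    V.strHom ≫ V.strDesc g = g := by
  ext
  change V.str ≫ F.map g.f ≫ inv W.str = g.f
  rw [← Category.assoc, g.h, Category.assoc, IsIso.hom_inv_id, Category.comp_id]

theorem strDesc_strHom_comp (V : Coalgebra F) {W : Coalgebra F} [IsIso W.str]
    (g : (⟨F.obj V.V, F.map V.str⟩ : Coalgebra F) ⟶ W) :
    V.strDesc (V.strHom ≫ g) = g := by
  ext
  change F.map (V.str ≫ g.f) ≫ inv W.str = g.f
  rw [F.map_comp, g.h, Category.assoc, IsIso.hom_inv_id, Category.comp_id]

theorem isLocal_strHom (V : Coalgebra F) :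
    ObjectProperty.isLocal (fun W : Coalgebra F => IsIso W.str) V.strHom := fun _ _ =>
  Function.bijective_iff_has_inverse.2 ⟨V.strDesc, V.strDesc_strHom_comp, V.strHom_comp_strDesc⟩

end CategoryTheory.Endofunctor.Coalgebra

/-- For any `F`-coalgebra `(V, ν)`, the coaction `ν` defines a coalgebra homomorphism
`(V, ν) ⟶ (F V, F ν)`, and this homomorphism is `F`-local: its image under the left
adjoint `I` to the inclusion of `Fix(F)` is an isomorphism. -/
theorem coaction_is_local {C : Type u} [Category.{v} C] (F : C ⥤ C)
    (h : ∃ lam : Ordinal.{w}, CompatibleWithSequences F lam)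
    (I : Endofunctor.Coalgebra F ⥤
      ObjectProperty.FullSubcategory (fun V : Endofunctor.Coalgebra F => IsIso V.str))
    (adj : I ⊣ ObjectProperty.ι
      (fun V : Endofunctor.Coalgebra F => IsIso V.str))
    (V : Endofunctor.Coalgebra F) :
    IsIso (I.map
      ({ f := V.str, h := rfl } :
        V ⟶ (⟨F.obj V.V, F.map V.str⟩ : Endofunctor.Coalgebra F))) := by
  refine (ObjectProperty.isLocal_iff_isIso_map adj V.strHom).1 ?_
  rintro _ ⟨W, rfl⟩
  exact V.isLocal_strHom _ W.property
end

section
/- Let C be a category, F : C ⥤ C an endofunctor, and suppose there exists a limit ordinal λ such that (C, F) is compatible with λ-sequences; let I be a left adjoint to the inclusion Fix(F) ⥤ Endofunctor.Coalgebra F. Let φ : (V, ν) ⟶ (W, μ) be an F-coalgebra homomorphism with underlying morphism φ.f : V ⟶ W in C. If there exists a morphism s : W ⟶ F.obj V in C such that φ.f ≫ s = ν and s ≫ F.map φ.f = μ, then φ is F-local: I.map φ is an isomorphism. -/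
open CategoryTheory CategoryTheory.Limits

universe w v u

/-!
By the adjunction, `I.map φ` is an isomorphism as soon as precomposition with `φ` is a bijection
`(W ⟶ T) → (V ⟶ T)` for every coalgebra `T` with invertible coaction `τ`. Such a `T` is rigid:
a homomorphism `g : W ⟶ T` satisfies `g = μ ≫ F g ≫ τ⁻¹ = s ≫ F (φ ≫ g) ≫ τ⁻¹`, so it is
determined by `φ ≫ g`, and conversely every `g : V ⟶ T` extends to `s ≫ F g ≫ τ⁻¹`.
-/

namespace CategoryTheory.Endofunctor.Coalgebra

variable {C : Type u} [Category.{v} C] {F : C ⥤ C} {V W T : Coalgebra F} [IsIso T.str]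
  (φ : V ⟶ W) {s : W.V ⟶ F.obj V.V}

lemma hom_f_eq_of_lift (hs2 : s ≫ F.map φ.f = W.str) (g : W ⟶ T) :
    g.f = s ≫ F.map (φ.f ≫ g.f) ≫ inv T.str := by
  rw [← Category.assoc, IsIso.eq_comp_inv, ← g.h, ← hs2, F.map_comp, Category.assoc]

lemma comp_lift_comp_map_comp_inv (hs1 : φ.f ≫ s = V.str) (g : V ⟶ T) :
    φ.f ≫ s ≫ F.map g.f ≫ inv T.str = g.f := by
  rw [← Category.assoc, hs1, ← Category.assoc, g.h, Category.assoc, IsIso.hom_inv_id,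
    Category.comp_id]

@[simps]
noncomputable def extendOfLift (hs1 : φ.f ≫ s = V.str) (hs2 : s ≫ F.map φ.f = W.str)
    (g : V ⟶ T) : W ⟶ T where
  f := s ≫ F.map g.f ≫ inv T.str
  h := by
    rw [← hs2, Category.assoc, ← F.map_comp, comp_lift_comp_map_comp_inv φ hs1]
    simp

lemma comp_extendOfLift (hs1 : φ.f ≫ s = V.str) (hs2 : s ≫ F.map φ.f = W.str) (g : V ⟶ T) :
    φ ≫ extendOfLift φ hs1 hs2 g = g := by
  ext
  exact comp_lift_comp_map_comp_inv φ hs1 g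

lemma comp_bijective_of_lift (hs1 : φ.f ≫ s = V.str) (hs2 : s ≫ F.map φ.f = W.str) :
    Function.Bijective (fun g : W ⟶ T => φ ≫ g) := by
  refine ⟨fun g₁ g₂ hg => ?_, fun g => ⟨extendOfLift φ hs1 hs2 g, comp_extendOfLift φ hs1 hs2 g⟩⟩
  ext
  rw [hom_f_eq_of_lift φ hs2 g₁, hom_f_eq_of_lift φ hs2 g₂]
  simp only at hg
  rw [← comp_f, ← comp_f, hg]

end CategoryTheory.Endofunctor.Coalgebra

theorem local_of_lift_general {C : Type u} [Category.{v} C] (F : C ⥤ C)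
    (I : Endofunctor.Coalgebra F ⥤
      ObjectProperty.FullSubcategory (fun V : Endofunctor.Coalgebra F => IsIso V.str))
    (adj : I ⊣ ObjectProperty.ι
      (fun V : Endofunctor.Coalgebra F => IsIso V.str))
    {V W : Endofunctor.Coalgebra F} (φ : V ⟶ W)
    (s : W.V ⟶ F.obj V.V) (hs1 : φ.f ≫ s = V.str) (hs2 : s ≫ F.map φ.f = W.str) :
    IsIso (I.map φ) := by
  rw [isIso_iff_coyoneda_map_bijective]
  intro T
  have : IsIso ((ObjectProperty.ι _).obj T).str := T.property
  rw [adj.map_comp_bijective_iff]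
  exact Endofunctor.Coalgebra.comp_bijective_of_lift φ hs1 hs2

/-- A sufficient criterion for `F`-locality: if a coalgebra homomorphism
`φ : (V, ν) ⟶ (W, μ)` admits `s : W ⟶ F V` in `C` with `φ.f ≫ s = ν` and
`s ≫ F.map φ.f = μ`, then `I.map φ` is an isomorphism. -/
theorem local_of_lift {C : Type u} [Category.{v} C] (F : C ⥤ C)
    (h : ∃ lam : Ordinal.{w}, CompatibleWithSequences F lam)
    (I : Endofunctor.Coalgebra F ⥤
      ObjectProperty.FullSubcategory (fun V : Endofunctor.Coalgebra F => IsIso V.str))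
    (adj : I ⊣ ObjectProperty.ι
      (fun V : Endofunctor.Coalgebra F => IsIso V.str))
    {V W : Endofunctor.Coalgebra F} (φ : V ⟶ W)
    (s : W.V ⟶ F.obj V.V) (hs1 : φ.f ≫ s = V.str) (hs2 : s ≫ F.map φ.f = W.str) :
    IsIso (I.map φ) :=
  local_of_lift_general F I adj φ s hs1 hs2
end

section
/- Let C be a category, F : C ⥤ C an endofunctor, and suppose there exists a limit ordinal λ such that C has limits of shape (Set.Iio θ)ᵒᵖ for every limit ordinal 0 < θ ≤ λ and F preserves limits of shape (Set.Iio λ)ᵒᵖ; let T be a right adjoint to the inclusion of the full subcategory of Endofunctor.Algebra F spanned by the algebras with invertible action. Let φ : (A, α) ⟶ (B, β) be an F-algebra homomorphism with underlying morphism φ.f : A ⟶ B in C. If there exists a morphism s : F.obj B ⟶ A in C such that F.map φ.f ≫ s = α and s ≫ φ.f = β, then T.map φ is an isomorphism. -/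
/-!
For an algebra `X` with invertible structure map, every algebra map `g : X ⟶ A` satisfies
`g.f = X.str⁻¹ ≫ F.map (g ≫ φ).f ≫ s`, so postcomposition with `φ` is a bijection on maps out
of `X`, with inverse `ψ ↦ X.str⁻¹ ≫ F.map ψ.f ≫ s`. By the adjunction these are the maps into
`T A` and `T B`, so `T.map φ` is an isomorphism by Yoneda.
-/

open CategoryTheory CategoryTheory.Limits

universe w v u

/-- The pair `(C, F)` is compatible with inverse `λ`-sequences: `λ` is a limit ordinal,
`C` has limits of shape `(Set.Iio θ)ᵒᵖ` for every limit ordinal `0 < θ ≤ λ`, and `F`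
preserves limits of shape `(Set.Iio λ)ᵒᵖ`. -/
def CompatibleWithInverseSequences {C : Type u} [Category.{v} C] (F : C ⥤ C)
    (lam : Ordinal.{w}) : Prop :=
  Order.IsSuccLimit lam ∧
    (∀ θ : Ordinal.{w}, Order.IsSuccLimit θ → 0 < θ → θ ≤ lam →
      HasLimitsOfShape (Set.Iio θ)ᵒᵖ C) ∧
    PreservesLimitsOfShape (Set.Iio lam)ᵒᵖ F

namespace CategoryTheory.Endofunctor.Algebra

variable {C : Type*} [Category C] {F : C ⥤ C} {A B X : Algebra F}
  {φ : A ⟶ B} {s : F.obj B.a ⟶ A.a}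

theorem hom_f_eq_of_isIso_str (hX : IsIso X.str) (hs : F.map φ.f ≫ s = A.str) (g : X ⟶ A) :
    g.f = inv X.str ≫ F.map (g ≫ φ).f ≫ s := by
  rw [comp_f, F.map_comp, Category.assoc, hs, g.h, IsIso.inv_hom_id_assoc]

@[simps]
noncomputable def liftOfSection (hX : IsIso X.str) (hs₁ : F.map φ.f ≫ s = A.str)
    (hs₂ : s ≫ φ.f = B.str) (ψ : X ⟶ B) : X ⟶ A where
  f := inv X.str ≫ F.map ψ.f ≫ s
  h := by
    have hψ : (inv X.str ≫ F.map ψ.f ≫ s) ≫ φ.f = ψ.f := by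
      rw [Category.assoc, Category.assoc, hs₂, ψ.h, IsIso.inv_hom_id_assoc]
    rw [← hs₁, ← Category.assoc, ← F.map_comp, hψ, IsIso.hom_inv_id_assoc]

theorem bijective_comp_of_isIso_str (hX : IsIso X.str) (hs₁ : F.map φ.f ≫ s = A.str)
    (hs₂ : s ≫ φ.f = B.str) :
    Function.Bijective fun g : X ⟶ A => g ≫ φ := by
  refine ⟨fun g₁ g₂ hg => ?_, fun ψ => ⟨liftOfSection hX hs₁ hs₂ ψ, ?_⟩⟩
  · ext
    rw [hom_f_eq_of_isIso_str hX hs₁ g₁, hom_f_eq_of_isIso_str hX hs₁ g₂,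
      show g₁ ≫ φ = g₂ ≫ φ from hg]
  · ext
    simp only [comp_f, liftOfSection_f, Category.assoc, hs₂, ψ.h, IsIso.inv_hom_id_assoc]

end CategoryTheory.Endofunctor.Algebra

theorem colocal_of_lift_general {C : Type u} [Category.{v} C] (F : C ⥤ C)
    (T : Endofunctor.Algebra F ⥤
      ObjectProperty.FullSubcategory (fun A : Endofunctor.Algebra F => IsIso A.str))
    (adj : ObjectProperty.ι
      (fun A : Endofunctor.Algebra F => IsIso A.str) ⊣ T)
    {A B : Endofunctor.Algebra F} (φ : A ⟶ B)
    (s : F.obj B.a ⟶ A.a) (hs1 : F.map φ.f ≫ s = A.str) (hs2 : s ≫ φ.f = B.str) :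
    IsIso (T.map φ) := by
  refine isIso_of_yoneda_map_bijective _ fun Y => ?_
  rw [adj.comp_map_bijective_iff]
  exact Endofunctor.Algebra.bijective_comp_of_isIso_str Y.property hs1 hs2

/-- A sufficient criterion for `F`-colocality: if an algebra homomorphism
`φ : (A, α) ⟶ (B, β)` admits `s : F B ⟶ A` in `C` with `F.map φ.f ≫ s = α` and
`s ≫ φ.f = β`, then `T.map φ` is an isomorphism, where `T` is a right adjoint to the
inclusion of the algebras with invertible action. -/
theorem colocal_of_lift {C : Type u} [Category.{v} C] (F : C ⥤ C)
    (h : ∃ lam : Ordinal.{w}, CompatibleWithInverseSequences F lam)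
    (T : Endofunctor.Algebra F ⥤
      ObjectProperty.FullSubcategory (fun A : Endofunctor.Algebra F => IsIso A.str))
    (adj : ObjectProperty.ι
      (fun A : Endofunctor.Algebra F => IsIso A.str) ⊣ T)
    {A B : Endofunctor.Algebra F} (φ : A ⟶ B)
    (s : F.obj B.a ⟶ A.a) (hs1 : F.map φ.f ≫ s = A.str) (hs2 : s ≫ φ.f = B.str) :
    IsIso (T.map φ) :=
  colocal_of_lift_general F T adj φ s hs1 hs2
end
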